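/- arXiv:1806.02112 — 4 statements merged into one kernel-verified Lean document; each statement's English description precedes it below -/
import Mathlib

section
/- Let L be a finite list whose entries are literals x_i or x̄_i for variables i ∈ {1,…,n}. For the ORDER problem, variable i is expressed in L iff some occurrence of x_i in L has no occurrence of x̄_i before it (equivalently, the first literal of variable i appearing in L is x_i). Let v(L) be the number of expressed variables. For a position p of L, let L−p denote L with the entry at position p removed; p is redundant if v(L−p) = v(L), critical positive if v(L−p) < v(L), and critical negative if v(L−p) > v(L); let r(L), c⁺(L), c⁻(L) denote the numbers of redundant, critical positive, and critical negative positions. Then c⁺(L) ≤ r(L) + v(L) and c⁻(L) ≤ r(L). -/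
/-- A literal over `n` variables: `(true, i)` represents `x i` and `(false, i)`
represents the negated literal `x̄ i`. -/
abbrev Lit (n : ℕ) : Type := Bool × Fin n

/-- For ORDER, variable `i` is expressed in `L` iff the first literal of variable `i`
appearing in `L` is the positive literal `x i` (equivalently, some occurrence of `x i`
has no occurrence of `x̄ i` before it). -/
def OrderExpressed {n : ℕ} (L : List (Lit n)) (i : Fin n) : Prop :=
  (L.filter (fun p => p.2 = i)).head? = some (true, i)

instance {n : ℕ} (L : List (Lit n)) (i : Fin n) : Decidable (OrderExpressed L i) := by
  unfold OrderExpressed; infer_instance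

/-- The ORDER fitness: the number of expressed variables. -/
def orderFitness {n : ℕ} (L : List (Lit n)) : ℕ :=
  (Finset.univ.filter (fun i => OrderExpressed L i)).card

/-- Number of redundant positions: deleting the entry leaves the fitness unchanged. -/
def orderRedundant {n : ℕ} (L : List (Lit n)) : ℕ :=
  ((Finset.range L.length).filter
    (fun p => orderFitness (L.eraseIdx p) = orderFitness L)).card

/-- Number of critical positive positions: deleting the entry decreases the fitness. -/
def orderCritPos {n : ℕ} (L : List (Lit n)) : ℕ :=
  ((Finset.range L.length).filter
    (fun p => orderFitness (L.eraseIdx p) < orderFitness L)).card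

/-- Number of critical negative positions: deleting the entry increases the fitness. -/
def orderCritNeg {n : ℕ} (L : List (Lit n)) : ℕ :=
  ((Finset.range L.length).filter
    (fun p => orderFitness L < orderFitness (L.eraseIdx p))).card

/-!
Deleting a position `p` can only change whether the variable `i` of `L[p]` is expressed, and it
changes nothing unless `p` is the first occurrence of `i`, since otherwise the first literal of
`i` stays the same. So every critical position is the first occurrence of its variable, and different
critical positions carry different variables. A critical positive position carries an expressed
variable, which gives `c⁺ ≤ v`. A critical negative position `p` carries a variable that becomes
expressed once `p` is gone, so it occurs again at some later position; that later occurrence is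
redundant and determines `p`, which gives `c⁻ ≤ r`.
-/

namespace List

variable {α : Type*} (f : α → Bool) {l : List α} {k : ℕ}

theorem filter_eraseIdx_of_not (hk : k < l.length) (h : f l[k] = false) :
    (l.eraseIdx k).filter f = l.filter f := by
  conv_rhs => rw [← take_append_drop k l, drop_eq_getElem_cons hk]
  simp only [eraseIdx_eq_take_drop_succ, filter_append, filter_cons, h]
  rfl

theorem head?_filter_eraseIdx_of_mem_take {x : α} (hx : x ∈ l.take k) (h : f x) :
    ((l.eraseIdx k).filter f).head? = (l.filter f).head? := by
  obtain ⟨y, hy⟩ := Option.isSome_iff_exists.mp (find?_isSome.mpr ⟨x, hx, h⟩)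
  conv_rhs => rw [← take_append_drop k l]
  simp only [eraseIdx_eq_take_drop_succ, filter_append, head?_append, head?_filter, hy,
    Option.some_or]

end List

section

variable {n : ℕ} {L : List (Lit n)} {p q : ℕ}

theorem OrderExpressed.mem {i : Fin n} (h : OrderExpressed L i) : (true, i) ∈ L :=
  (List.mem_filter.mp (List.mem_of_mem_head? h)).1

theorem orderExpressed_eraseIdx_iff_of_ne (hp : p < L.length) {i : Fin n} (hi : L[p].2 ≠ i) :
    OrderExpressed (L.eraseIdx p) i ↔ OrderExpressed L i := by
  unfold OrderExpressed
  rw [List.filter_eraseIdx_of_not _ hp (by simpa using hi)]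

theorem orderExpressed_eraseIdx_iff_of_mem_take {x : Lit n} (hx : x ∈ L.take p) {i : Fin n}
    (hi : x.2 = i) : OrderExpressed (L.eraseIdx p) i ↔ OrderExpressed L i := by
  unfold OrderExpressed
  rw [List.head?_filter_eraseIdx_of_mem_take _ hx (by simpa using hi)]

theorem orderFitness_le_of_forall_imp {L' : List (Lit n)}
    (h : ∀ i, OrderExpressed L i → OrderExpressed L' i) : orderFitness L ≤ orderFitness L' :=
  Finset.card_le_card (Finset.monotone_filter_right _ fun i _ => h i)

theorem orderFitness_eraseIdx_eq_of_iff (hp : p < L.length)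
    (h : OrderExpressed (L.eraseIdx p) L[p].2 ↔ OrderExpressed L L[p].2) :
    orderFitness (L.eraseIdx p) = orderFitness L := by
  have hall : ∀ i, OrderExpressed (L.eraseIdx p) i ↔ OrderExpressed L i := fun i => by
    by_cases hi : L[p].2 = i
    · exact hi ▸ h
    · exact orderExpressed_eraseIdx_iff_of_ne hp hi
  exact le_antisymm (orderFitness_le_of_forall_imp fun i => (hall i).1)
    (orderFitness_le_of_forall_imp fun i => (hall i).2)

theorem orderFitness_eraseIdx_eq_of_lt (hq : q < L.length) (hpq : p < q)
    (h : L[p].2 = L[q].2) : orderFitness (L.eraseIdx q) = orderFitness L :=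
  orderFitness_eraseIdx_eq_of_iff hq <| orderExpressed_eraseIdx_iff_of_mem_take
    (List.mem_take_iff_getElem.mpr ⟨p, by omega, rfl⟩) h

theorem eq_of_orderFitness_eraseIdx_ne (hp : p < L.length) (hq : q < L.length)
    (h : L[p].2 = L[q].2) (hp' : orderFitness (L.eraseIdx p) ≠ orderFitness L)
    (hq' : orderFitness (L.eraseIdx q) ≠ orderFitness L) : p = q := by
  rcases lt_trichotomy p q with hpq | hpq | hqp
  · exact absurd (orderFitness_eraseIdx_eq_of_lt hq hpq h) hq'
  · exact hpq
  · exact absurd (orderFitness_eraseIdx_eq_of_lt hp hqp h.symm) hp'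

theorem orderExpressed_of_orderFitness_eraseIdx_lt (hp : p < L.length)
    (h : orderFitness (L.eraseIdx p) < orderFitness L) : OrderExpressed L L[p].2 := by
  by_contra hL
  refine h.not_ge (orderFitness_le_of_forall_imp fun i hi => ?_)
  have hne : L[p].2 ≠ i := by rintro rfl; exact hL hi
  exact (orderExpressed_eraseIdx_iff_of_ne hp hne).2 hi

theorem orderExpressed_eraseIdx_of_orderFitness_lt (hp : p < L.length)
    (h : orderFitness L < orderFitness (L.eraseIdx p)) :
    OrderExpressed (L.eraseIdx p) L[p].2 := by
  by_contra hL
  refine h.not_ge (orderFitness_le_of_forall_imp fun i hi => ?_)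
  have hne : L[p].2 ≠ i := by rintro rfl; exact hL hi
  exact (orderExpressed_eraseIdx_iff_of_ne hp hne).1 hi

theorem orderCritPos_le_orderFitness (L : List (Lit n)) : orderCritPos L ≤ orderFitness L := by
  refine Finset.card_le_card_of_forall_subsingleton
    (fun p i => ∃ hp : p < L.length, L[p].2 = i) (fun p hpC => ?_) ?_
  · obtain ⟨hp, hlt⟩ := by simpa using hpC
    exact ⟨L[p].2, by simpa using orderExpressed_of_orderFitness_eraseIdx_lt hp hlt, hp, rfl⟩
  · rintro i - p ⟨hpC, hp, rfl⟩ q ⟨hqC, hq, hqi⟩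
    exact eq_of_orderFitness_eraseIdx_ne hp hq hqi.symm
      (Finset.mem_filter.mp hpC).2.ne (Finset.mem_filter.mp hqC).2.ne

theorem orderCritNeg_le_orderRedundant (L : List (Lit n)) :
    orderCritNeg L ≤ orderRedundant L := by
  refine Finset.card_le_card_of_forall_subsingleton
    (fun p q => ∃ (hp : p < L.length) (hq : q < L.length), L[p].2 = L[q].2)
    (fun p hpC => ?_) ?_
  · obtain ⟨hp, hlt⟩ := by simpa using hpC
    obtain ⟨q, hq, hqp, hqi⟩ := List.mem_eraseIdx_iff_getElem.mp
      (orderExpressed_eraseIdx_of_orderFitness_lt hp hlt).mem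
    have hqi : L[q].2 = L[p].2 := by rw [hqi]
    rcases lt_or_gt_of_ne hqp with hqp | hpq
    · exact absurd (orderFitness_eraseIdx_eq_of_lt hp hqp hqi) hlt.ne'
    · refine ⟨q, ?_, hp, hq, hqi.symm⟩
      simpa [orderRedundant, hq] using orderFitness_eraseIdx_eq_of_lt hq hpq hqi.symm
  · rintro q - p ⟨hpC, hp, hq, hpq⟩ p' ⟨hpC', hp', hq', hpq'⟩
    exact eq_of_orderFitness_eraseIdx_ne hp hp' (hpq.trans hpq'.symm)
      (Finset.mem_filter.mp hpC).2.ne' (Finset.mem_filter.mp hpC').2.ne'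

end

/-- **Bounds on critical leaves for ORDER:** `c⁺(L) ≤ r(L) + v(L)` and `c⁻(L) ≤ r(L)`. -/
theorem order_critical_leaves_bound {n : ℕ} (L : List (Lit n)) :
    orderCritPos L ≤ orderRedundant L + orderFitness L ∧
    orderCritNeg L ≤ orderRedundant L :=
  ⟨(orderCritPos_le_orderFitness L).trans (Nat.le_add_left _ _),
    orderCritNeg_le_orderRedundant L⟩
end

section
/- Let L be a finite list whose entries are literals x_i or x̄_i for variables i ∈ {1,…,n}. For the MAJORITY problem, variable i is expressed in L iff L contains at least one occurrence of x_i and the number of occurrences of x_i in L is at least the number of occurrences of x̄_i. Let v(L) be the number of expressed variables. For a position p of L, let L−p denote L with the entry at position p removed; p is redundant if v(L−p) = v(L), critical positive if v(L−p) < v(L), and critical negative if v(L−p) > v(L); let r(L), c⁺(L), c⁻(L) denote the numbers of redundant, critical positive, and critical negative positions. Then c⁺(L) ≤ r(L) + v(L) and c⁻(L) ≤ 2·r(L). -/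
/-- For MAJORITY, variable `i` is expressed in `L` iff `L` contains at least one
occurrence of `x i` and the number of occurrences of `x i` is at least the number of
occurrences of `x̄ i`. -/
def MajExpressed {n : ℕ} (L : List (Lit n)) (i : Fin n) : Prop :=
  0 < L.count (true, i) ∧ L.count (false, i) ≤ L.count (true, i)

instance {n : ℕ} (L : List (Lit n)) (i : Fin n) : Decidable (MajExpressed L i) := by
  unfold MajExpressed; infer_instance

/-- The MAJORITY fitness: the number of expressed variables. -/
def majFitness {n : ℕ} (L : List (Lit n)) : ℕ :=
  (Finset.univ.filter (fun i => MajExpressed L i)).card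

/-- Number of redundant positions: deleting the entry leaves the fitness unchanged. -/
def majRedundant {n : ℕ} (L : List (Lit n)) : ℕ :=
  ((Finset.range L.length).filter
    (fun p => majFitness (L.eraseIdx p) = majFitness L)).card

/-- Number of critical positive positions: deleting the entry decreases the fitness. -/
def majCritPos {n : ℕ} (L : List (Lit n)) : ℕ :=
  ((Finset.range L.length).filter
    (fun p => majFitness (L.eraseIdx p) < majFitness L)).card

/-- Number of critical negative positions: deleting the entry increases the fitness. -/
def majCritNeg {n : ℕ} (L : List (Lit n)) : ℕ :=
  ((Finset.range L.length).filter
    (fun p => majFitness L < majFitness (L.eraseIdx p))).card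

section AuxGeneral

variable {α : Type*} [DecidableEq α]

lemma count_eraseIdx' [BEq α] [LawfulBEq α] (L : List α) (p : ℕ) (hp : p < L.length) (a : α) :
    (L.eraseIdx p).count a = L.count a - (if L[p] = a then 1 else 0) := by
  have h2 : L.take p ++ L[p] :: L.drop (p+1) = L := by
    rw [List.getElem_cons_drop, List.take_append_drop]
  generalize hq : (if L[p] = a then 1 else 0) = q
  rw [List.eraseIdx_eq_take_drop_succ, List.count_append]
  conv_rhs => rw [← h2]
  rw [List.count_append, List.count_cons]
  by_cases h : L[p] = a <;> simp [h] at hq ⊢ <;> omega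

lemma card_filter_getElem?_eq [BEq α] [LawfulBEq α] (L : List α) (a : α) :
    ((Finset.range L.length).filter (fun p => L[p]? = some a)).card = L.count a := by
  induction L with
  | nil => simp
  | cons b M ih =>
    rw [Finset.card_filter] at ih ⊢
    rw [List.length_cons, Finset.sum_range_succ']
    simp only [List.getElem?_cons_succ, List.getElem?_cons_zero, List.count_cons]
    rw [ih]
    by_cases h : b = a <;> simp [h]

end AuxGeneral

section MajAux

variable {n : ℕ}

lemma majExpressed_eraseIdx_of_ne {L : List (Lit n)} {p : ℕ} (hp : p < L.length)
    {j : Fin n} (hj : j ≠ L[p].2) :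
    MajExpressed (L.eraseIdx p) j ↔ MajExpressed L j := by
  have h1 : L[p] ≠ (true, j) := fun h => hj (by rw [h])
  have h2 : L[p] ≠ (false, j) := fun h => hj (by rw [h])
  unfold MajExpressed
  rw [count_eraseIdx' L p hp, count_eraseIdx' L p hp, if_neg h1, if_neg h2]
  simp

lemma majFitness_split (M : List (Lit n)) (i : Fin n) :
    majFitness M = (if MajExpressed M i then 1 else 0)
      + ((Finset.univ.erase i).filter (fun j => MajExpressed M j)).card := by
  have h : (Finset.univ.filter (fun j => MajExpressed M j)) =
      if MajExpressed M i then
        insert i ((Finset.univ.erase i).filter (fun j => MajExpressed M j))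
      else ((Finset.univ.erase i).filter (fun j => MajExpressed M j)) := by
    rw [← Finset.filter_insert, Finset.insert_erase (Finset.mem_univ i)]
  rw [majFitness, h]
  split
  · rw [Finset.card_insert_of_notMem (by simp)]
    omega
  · simp

lemma majFitness_eraseIdx (L : List (Lit n)) (p : ℕ) (hp : p < L.length) :
    majFitness (L.eraseIdx p) + (if MajExpressed L L[p].2 then 1 else 0)
      = majFitness L + (if MajExpressed (L.eraseIdx p) L[p].2 then 1 else 0) := by
  have hE : ((Finset.univ.erase L[p].2).filter (fun j => MajExpressed (L.eraseIdx p) j))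
      = ((Finset.univ.erase L[p].2).filter (fun j => MajExpressed L j)) :=
    Finset.filter_congr (fun j hj =>
      majExpressed_eraseIdx_of_ne hp (Finset.mem_erase.mp hj).1)
  rw [majFitness_split (L.eraseIdx p) L[p].2, majFitness_split L L[p].2, hE]
  ring

lemma lt_iff_crit (L : List (Lit n)) (p : ℕ) (hp : p < L.length) :
    majFitness (L.eraseIdx p) < majFitness L ↔
      (MajExpressed L L[p].2 ∧ ¬ MajExpressed (L.eraseIdx p) L[p].2) := by
  have h := majFitness_eraseIdx L p hp
  by_cases h1 : MajExpressed L L[p].2 <;> by_cases h2 : MajExpressed (L.eraseIdx p) L[p].2 <;>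
    simp [h1, h2] at h ⊢ <;> omega

lemma gt_iff_crit (L : List (Lit n)) (p : ℕ) (hp : p < L.length) :
    majFitness L < majFitness (L.eraseIdx p) ↔
      (¬ MajExpressed L L[p].2 ∧ MajExpressed (L.eraseIdx p) L[p].2) := by
  have h := majFitness_eraseIdx L p hp
  by_cases h1 : MajExpressed L L[p].2 <;> by_cases h2 : MajExpressed (L.eraseIdx p) L[p].2 <;>
    simp [h1, h2] at h ⊢ <;> omega

lemma eq_iff_red (L : List (Lit n)) (p : ℕ) (hp : p < L.length) :
    majFitness (L.eraseIdx p) = majFitness L ↔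
      (MajExpressed L L[p].2 ↔ MajExpressed (L.eraseIdx p) L[p].2) := by
  have h := majFitness_eraseIdx L p hp
  by_cases h1 : MajExpressed L L[p].2 <;> by_cases h2 : MajExpressed (L.eraseIdx p) L[p].2 <;>
    simp [h1, h2] at h ⊢ <;> omega

lemma expressed_erase_true {L : List (Lit n)} {p : ℕ} {i : Fin n} (hp : p < L.length)
    (hbv : L[p] = (true, i)) :
    MajExpressed (L.eraseIdx p) i ↔
      (1 < L.count (true, i) ∧ L.count (false, i) + 1 ≤ L.count (true, i)) := by
  unfold MajExpressed
  rw [count_eraseIdx' L p hp, count_eraseIdx' L p hp, hbv,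
    if_pos rfl, if_neg (show ¬ (((true, i) : Lit n) = (false, i)) by simp)]
  omega

lemma expressed_erase_false {L : List (Lit n)} {p : ℕ} {i : Fin n} (hp : p < L.length)
    (hbv : L[p] = (false, i)) :
    MajExpressed (L.eraseIdx p) i ↔
      (0 < L.count (true, i) ∧ L.count (false, i) ≤ L.count (true, i) + 1) := by
  have hf : 0 < L.count (false, i) := by
    have := List.getElem_mem hp
    rw [hbv] at this
    exact List.count_pos_iff.mpr this
  unfold MajExpressed
  rw [count_eraseIdx' L p hp, count_eraseIdx' L p hp, hbv,
    if_pos rfl, if_neg (show ¬ (((false, i) : Lit n) = (true, i)) by simp)]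
  omega

lemma critPos_char {L : List (Lit n)} {p : ℕ} {i : Fin n}
    (hs : L[p]? = some (true, i)) :
    (majFitness (L.eraseIdx p) < majFitness L) ↔
      (0 < L.count (true, i) ∧ L.count (false, i) ≤ L.count (true, i) ∧
        (L.count (true, i) = 1 ∨ L.count (false, i) = L.count (true, i))) := by
  obtain ⟨hlt, hbv⟩ := List.getElem?_eq_some_iff.mp hs
  have hsnd : L[p].2 = i := by rw [hbv]
  have hcrit := lt_iff_crit L p hlt
  rw [hsnd, expressed_erase_true hlt hbv] at hcrit
  rw [hcrit]
  simp only [MajExpressed]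
  omega

lemma critPos_char_false {L : List (Lit n)} {p : ℕ} {i : Fin n}
    (hs : L[p]? = some (false, i)) :
    ¬ (majFitness (L.eraseIdx p) < majFitness L) := by
  obtain ⟨hlt, hbv⟩ := List.getElem?_eq_some_iff.mp hs
  have hsnd : L[p].2 = i := by rw [hbv]
  have hcrit := lt_iff_crit L p hlt
  rw [hsnd, expressed_erase_false hlt hbv] at hcrit
  rw [hcrit]
  simp only [MajExpressed]
  omega

lemma critNeg_char {L : List (Lit n)} {p : ℕ} {i : Fin n}
    (hs : L[p]? = some (false, i)) :
    (majFitness L < majFitness (L.eraseIdx p)) ↔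
      (0 < L.count (true, i) ∧ L.count (false, i) = L.count (true, i) + 1) := by
  obtain ⟨hlt, hbv⟩ := List.getElem?_eq_some_iff.mp hs
  have hsnd : L[p].2 = i := by rw [hbv]
  have hcrit := gt_iff_crit L p hlt
  rw [hsnd, expressed_erase_false hlt hbv] at hcrit
  rw [hcrit]
  simp only [MajExpressed]
  omega

lemma critNeg_char_true {L : List (Lit n)} {p : ℕ} {i : Fin n}
    (hs : L[p]? = some (true, i)) :
    ¬ (majFitness L < majFitness (L.eraseIdx p)) := by
  obtain ⟨hlt, hbv⟩ := List.getElem?_eq_some_iff.mp hs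
  have hsnd : L[p].2 = i := by rw [hbv]
  have hcrit := gt_iff_crit L p hlt
  rw [hsnd, expressed_erase_true hlt hbv] at hcrit
  rw [hcrit]
  simp only [MajExpressed]
  omega

lemma red_char_true {L : List (Lit n)} {p : ℕ} {i : Fin n}
    (hs : L[p]? = some (true, i)) :
    (majFitness (L.eraseIdx p) = majFitness L) ↔
      ¬ (0 < L.count (true, i) ∧ L.count (false, i) ≤ L.count (true, i) ∧
        (L.count (true, i) = 1 ∨ L.count (false, i) = L.count (true, i))) := by
  obtain ⟨hlt, _⟩ := List.getElem?_eq_some_iff.mp hs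
  have h1 := critPos_char hs
  have h2 := critNeg_char_true hs
  constructor
  · intro he
    rw [← h1]
    omega
  · intro hno
    have : ¬ (majFitness (L.eraseIdx p) < majFitness L) := by rw [h1]; exact hno
    omega

lemma red_char_false {L : List (Lit n)} {p : ℕ} {i : Fin n}
    (hs : L[p]? = some (false, i)) :
    (majFitness (L.eraseIdx p) = majFitness L) ↔
      ¬ (0 < L.count (true, i) ∧ L.count (false, i) = L.count (true, i) + 1) := by
  obtain ⟨hlt, _⟩ := List.getElem?_eq_some_iff.mp hs
  have h1 := critNeg_char hs
  have h2 := critPos_char_false hs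
  constructor
  · intro he
    rw [← h1]
    omega
  · intro hno
    have : ¬ (majFitness L < majFitness (L.eraseIdx p)) := by rw [h1]; exact hno
    omega

lemma fiber_bounds (L : List (Lit n)) (d : Fin n) (i : Fin n) :
    ((((Finset.range L.length).filter
        (fun p => majFitness (L.eraseIdx p) < majFitness L)).filter
        (fun p => (L[p]?.getD (true, d)).2 = i)).card
      ≤ ((((Finset.range L.length).filter
        (fun p => majFitness (L.eraseIdx p) = majFitness L)).filter
        (fun p => (L[p]?.getD (true, d)).2 = i)).card) + (if MajExpressed L i then 1 else 0)) ∧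
    ((((Finset.range L.length).filter
        (fun p => majFitness L < majFitness (L.eraseIdx p))).filter
        (fun p => (L[p]?.getD (true, d)).2 = i)).card
      ≤ 2 * ((((Finset.range L.length).filter
        (fun p => majFitness (L.eraseIdx p) = majFitness L)).filter
        (fun p => (L[p]?.getD (true, d)).2 = i)).card)) := by
  set t := L.count (true, i) with ht
  set f := L.count (false, i) with hf
  set T := (Finset.range L.length).filter (fun p => L[p]? = some ((true, i) : Lit n)) with hTdef
  set F := (Finset.range L.length).filter (fun p => L[p]? = some ((false, i) : Lit n)) with hFdef
  have hT : T.card = t := by rw [hTdef, ht]; exact card_filter_getElem?_eq L (true, i)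
  have hF : F.card = f := by rw [hFdef, hf]; exact card_filter_getElem?_eq L (false, i)
  have hfib : ∀ p, p < L.length →
      ((L[p]?.getD (true, d)).2 = i ↔
        (L[p]? = some ((true, i) : Lit n) ∨ L[p]? = some ((false, i) : Lit n))) := by
    intro p hlt
    rw [List.getElem?_eq_getElem hlt]
    cases hbj : L[p] with
    | mk b j =>
      cases b <;> simp [Prod.ext_iff, eq_comm]
  constructor
  · -- critical positive bound
    by_cases hc : 0 < t ∧ f ≤ t ∧ (t = 1 ∨ f = t)
    · have hexp : MajExpressed L i := by
        simp only [MajExpressed, ← ht, ← hf]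
        exact ⟨hc.1, hc.2.1⟩
      rw [if_pos hexp]
      have h1 : (((Finset.range L.length).filter
          (fun p => majFitness (L.eraseIdx p) < majFitness L)).filter
          (fun p => (L[p]?.getD (true, d)).2 = i)) ⊆ T := by
        intro p hp'
        obtain ⟨hpC, hgi⟩ := Finset.mem_filter.mp hp'
        obtain ⟨hpr, hlt'⟩ := Finset.mem_filter.mp hpC
        rcases (hfib p (Finset.mem_range.mp hpr)).mp hgi with hsome | hsome
        · exact Finset.mem_filter.mpr ⟨hpr, hsome⟩
        · exact absurd hlt' (critPos_char_false hsome)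
      have h2 : F ⊆ (((Finset.range L.length).filter
          (fun p => majFitness (L.eraseIdx p) = majFitness L)).filter
          (fun p => (L[p]?.getD (true, d)).2 = i)) := by
        intro p hp'
        obtain ⟨hpr, hsome⟩ := Finset.mem_filter.mp hp'
        refine Finset.mem_filter.mpr ⟨Finset.mem_filter.mpr ⟨hpr, ?_⟩,
          (hfib p (Finset.mem_range.mp hpr)).mpr (Or.inr hsome)⟩
        rw [red_char_false hsome]
        omega
      calc (((Finset.range L.length).filter
          (fun p => majFitness (L.eraseIdx p) < majFitness L)).filter
          (fun p => (L[p]?.getD (true, d)).2 = i)).card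
          ≤ T.card := Finset.card_le_card h1
        _ = t := hT
        _ ≤ f + 1 := by omega
        _ = F.card + 1 := by rw [hF]
        _ ≤ _ := by
            have := Finset.card_le_card h2
            omega
    · have hempty : (((Finset.range L.length).filter
          (fun p => majFitness (L.eraseIdx p) < majFitness L)).filter
          (fun p => (L[p]?.getD (true, d)).2 = i)) = ∅ := by
        apply Finset.eq_empty_iff_forall_notMem.mpr
        intro p hp'
        obtain ⟨hpC, hgi⟩ := Finset.mem_filter.mp hp'
        obtain ⟨hpr, hlt'⟩ := Finset.mem_filter.mp hpC
        rcases (hfib p (Finset.mem_range.mp hpr)).mp hgi with hsome | hsome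
        · exact hc ((critPos_char hsome).mp hlt')
        · exact critPos_char_false hsome hlt'
      rw [hempty]
      simp
  · -- critical negative bound
    by_cases hc : 0 < t ∧ f = t + 1
    · have h1 : (((Finset.range L.length).filter
          (fun p => majFitness L < majFitness (L.eraseIdx p))).filter
          (fun p => (L[p]?.getD (true, d)).2 = i)) ⊆ F := by
        intro p hp'
        obtain ⟨hpC, hgi⟩ := Finset.mem_filter.mp hp'
        obtain ⟨hpr, hlt'⟩ := Finset.mem_filter.mp hpC
        rcases (hfib p (Finset.mem_range.mp hpr)).mp hgi with hsome | hsome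
        · exact absurd hlt' (critNeg_char_true hsome)
        · exact Finset.mem_filter.mpr ⟨hpr, hsome⟩
      have h2 : T ⊆ (((Finset.range L.length).filter
          (fun p => majFitness (L.eraseIdx p) = majFitness L)).filter
          (fun p => (L[p]?.getD (true, d)).2 = i)) := by
        intro p hp'
        obtain ⟨hpr, hsome⟩ := Finset.mem_filter.mp hp'
        refine Finset.mem_filter.mpr ⟨Finset.mem_filter.mpr ⟨hpr, ?_⟩,
          (hfib p (Finset.mem_range.mp hpr)).mpr (Or.inl hsome)⟩
        rw [red_char_true hsome]
        omega
      have hle1 := Finset.card_le_card h1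
      have hle2 := Finset.card_le_card h2
      rw [hF] at hle1
      rw [hT] at hle2
      omega
    · have hempty : (((Finset.range L.length).filter
          (fun p => majFitness L < majFitness (L.eraseIdx p))).filter
          (fun p => (L[p]?.getD (true, d)).2 = i)) = ∅ := by
        apply Finset.eq_empty_iff_forall_notMem.mpr
        intro p hp'
        obtain ⟨hpC, hgi⟩ := Finset.mem_filter.mp hp'
        obtain ⟨hpr, hlt'⟩ := Finset.mem_filter.mp hpC
        rcases (hfib p (Finset.mem_range.mp hpr)).mp hgi with hsome | hsome
        · exact critNeg_char_true hsome hlt'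
        · exact hc ((critNeg_char hsome).mp hlt')
      rw [hempty]
      simp

end MajAux

/-- **Bounds on critical leaves for MAJORITY:** `c⁺(L) ≤ r(L) + v(L)` and
`c⁻(L) ≤ 2 r(L)`. -/
theorem majority_critical_leaves_bound {n : ℕ} (L : List (Lit n)) :
    majCritPos L ≤ majRedundant L + majFitness L ∧
    majCritNeg L ≤ 2 * majRedundant L := by
  rcases Nat.eq_zero_or_pos n with hn | hn
  · subst hn
    have h0 : ∀ M : List (Lit 0), majFitness M = 0 := fun M => by
      simp [majFitness]
    constructor
    · simp [majCritPos, h0]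
    · simp [majCritNeg, h0]
  · set d : Fin n := ⟨0, hn⟩ with hd
    have hfit : majFitness L = ∑ i : Fin n, (if MajExpressed L i then 1 else 0) :=
      Finset.card_filter _ _
    have hCp : majCritPos L = ∑ i : Fin n,
        ((((Finset.range L.length).filter
          (fun p => majFitness (L.eraseIdx p) < majFitness L)).filter
          (fun p => (L[p]?.getD (true, d)).2 = i)).card) :=
      Finset.card_eq_sum_card_fiberwise (fun p _ => Finset.mem_univ _)
    have hCn : majCritNeg L = ∑ i : Fin n,
        ((((Finset.range L.length).filter
          (fun p => majFitness L < majFitness (L.eraseIdx p))).filter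
          (fun p => (L[p]?.getD (true, d)).2 = i)).card) :=
      Finset.card_eq_sum_card_fiberwise (fun p _ => Finset.mem_univ _)
    have hR : majRedundant L = ∑ i : Fin n,
        ((((Finset.range L.length).filter
          (fun p => majFitness (L.eraseIdx p) = majFitness L)).filter
          (fun p => (L[p]?.getD (true, d)).2 = i)).card) :=
      Finset.card_eq_sum_card_fiberwise (fun p _ => Finset.mem_univ _)
    constructor
    · calc majCritPos L = _ := hCp
        _ ≤ ∑ i : Fin n, (((((Finset.range L.length).filter
              (fun p => majFitness (L.eraseIdx p) = majFitness L)).filter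
              (fun p => (L[p]?.getD (true, d)).2 = i)).card)
            + (if MajExpressed L i then 1 else 0)) :=
          Finset.sum_le_sum (fun i _ => (fiber_bounds L d i).1)
        _ = majRedundant L + majFitness L := by
            rw [Finset.sum_add_distrib, ← hR, ← hfit]
    · calc majCritNeg L = _ := hCn
        _ ≤ ∑ i : Fin n, 2 * (((((Finset.range L.length).filter
              (fun p => majFitness (L.eraseIdx p) = majFitness L)).filter
              (fun p => (L[p]?.getD (true, d)).2 = i)).card)) :=
          Finset.sum_le_sum (fun i _ => (fiber_bounds L d i).2)
        _ = 2 * majRedundant L := by rw [← Finset.mul_sum, ← hR]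
end

section
/- Let L be a finite list whose entries are literals x_i or x̄_i for variables i ∈ {1,…,n}, with fitness v(L) defined by the MAJORITY rule: variable i is expressed iff L contains at least one x_i and #{occurrences of x_i} ≥ #{occurrences of x̄_i}, and v(L) is the number of expressed variables. Let s(L) be the length of L, let r(L) be the number of redundant positions (positions whose deletion does not change v), and let A(L) ⊆ {1,…,n} be the set of variables i such that neither x_i nor x̄_i occurs in L. Then s(L) − v(L) ≤ 4·r(L), and |A(L)| + r(L) ≥ n − v(L). -/
/-- The set of variables `i` such that neither `x i` nor `x̄ i` occurs in `L`. -/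
def majAbsent {n : ℕ} (L : List (Lit n)) : Finset (Fin n) :=
  Finset.univ.filter (fun i => (true, i) ∉ L ∧ (false, i) ∉ L)

/-!
Everything decomposes variable by variable. Deleting an occurrence of a literal of variable `i`
changes only the status of `i`, and only through its counts `a` of `x i` and `b` of `x̄ i`;
so either all or none of the `a` occurrences of `x i` are redundant, and likewise for `x̄ i`.
Hence `s`, `v`, `r` and `|A|` are sums over the variables of simple functions of `(a, b)`, and
both bounds hold summand by summand, by a case analysis on `(a, b)`.
-/

theorem List.sum_map_eq_sum_count {α M : Type*} [Fintype α] [BEq α] [LawfulBEq α]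
    [AddCommMonoid M] (l : List α) (f : α → M) : (l.map f).sum = ∑ a, l.count a • f a := by
  induction l with
  | nil => simp
  | cons x t ih =>
    classical
    simp [List.count_cons, add_smul, Finset.sum_add_distrib, ih, add_comm]

theorem Finset.card_filter_univ_eq_iff_of_forall_ne {α : Type*} [Fintype α] [DecidableEq α]
    {P Q : α → Prop} [DecidablePred P] [DecidablePred Q] (i : α)
    (hPQ : ∀ j, j ≠ i → (P j ↔ Q j)) :
    (univ.filter P).card = (univ.filter Q).card ↔ (P i ↔ Q i) := by
  have hrest : ∑ j ∈ univ.erase i, (if P j then 1 else 0) =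
      ∑ j ∈ univ.erase i, (if Q j then 1 else 0) :=
    sum_congr rfl fun j hj => if_congr (hPQ j (ne_of_mem_erase hj)) rfl rfl
  rw [card_filter, card_filter, ← sum_erase_add _ _ (mem_univ i),
    ← sum_erase_add _ _ (mem_univ i), hrest]
  by_cases hP : P i <;> by_cases hQ : Q i <;> simp [hP, hQ]

/-- The MAJORITY rule for a variable with `a` positive and `b` negative occurrences. -/
def majRule (a b : ℕ) : Prop := 0 < a ∧ b ≤ a

instance (a b : ℕ) : Decidable (majRule a b) := by unfold majRule; infer_instance

def majRedundantCount (a b : ℕ) : ℕ :=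
  (if (majRule (a - 1) b ↔ majRule a b) then a else 0) +
    (if (majRule a (b - 1) ↔ majRule a b) then b else 0)

theorem add_le_four_mul_majRedundantCount_add (a b : ℕ) :
    a + b ≤ 4 * majRedundantCount a b + if majRule a b then 1 else 0 := by
  unfold majRedundantCount
  split_ifs <;> simp only [majRule] at * <;> omega

theorem one_le_absent_add_majRedundantCount_add (a b : ℕ) :
    1 ≤ (if a = 0 ∧ b = 0 then 1 else 0) + majRedundantCount a b +
      if majRule a b then 1 else 0 := by
  unfold majRedundantCount
  split_ifs <;> simp only [majRule] at * <;> omega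

section
variable {n : ℕ}

theorem majExpressed_iff (L : List (Lit n)) (i : Fin n) :
    MajExpressed L i ↔ majRule (L.count (true, i)) (L.count (false, i)) := Iff.rfl

theorem List.Perm.majFitness_eq {L L' : List (Lit n)} (h : L.Perm L') :
    majFitness L = majFitness L' := by
  simp only [majFitness, MajExpressed, h.count_eq]

theorem majExpressed_erase_of_ne (L : List (Lit n)) {x : Lit n} {j : Fin n} (hj : j ≠ x.2) :
    MajExpressed (L.erase x) j ↔ MajExpressed L j := by
  have hne : ∀ s, (s, j) ≠ x := fun s h => hj (by rw [← h])
  simp only [MajExpressed, List.count_erase_of_ne (hne _)]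

theorem majFitness_erase_eq_iff (L : List (Lit n)) (x : Lit n) :
    majFitness (L.erase x) = majFitness L ↔ (MajExpressed (L.erase x) x.2 ↔ MajExpressed L x.2) :=
  Finset.card_filter_univ_eq_iff_of_forall_ne x.2 fun _ hj => majExpressed_erase_of_ne L hj

theorem majRedundant_eq_sum_count (L : List (Lit n)) :
    majRedundant L =
      ∑ x : Lit n, if majFitness (L.erase x) = majFitness L then L.count x else 0 := by
  rw [majRedundant, Finset.card_filter, Finset.sum_range]
  have heraseIdx : ∀ p : Fin L.length, majFitness (L.eraseIdx p) = majFitness (L.erase L[p]) :=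
    fun p => (List.erase_getElem p.2).majFitness_eq.symm
  simp only [heraseIdx, Fin.getElem_fin]
  rw [Fin.sum_univ_fun_getElem L (fun x => if majFitness (L.erase x) = majFitness L then 1 else 0),
    List.sum_map_eq_sum_count]
  simp only [smul_eq_mul, mul_ite, mul_one, mul_zero]

theorem majRedundant_eq_sum_majRedundantCount (L : List (Lit n)) :
    majRedundant L = ∑ i, majRedundantCount (L.count (true, i)) (L.count (false, i)) := by
  rw [majRedundant_eq_sum_count, Fintype.sum_prod_type, Fintype.sum_bool,
    ← Finset.sum_add_distrib]
  refine Finset.sum_congr rfl fun i _ => ?_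
  have htf : ((true, i) : Lit n) ≠ (false, i) := by simp
  simp only [majFitness_erase_eq_iff, majExpressed_iff, List.count_erase_self,
    List.count_erase_of_ne htf, List.count_erase_of_ne htf.symm, majRedundantCount]

theorem length_eq_sum_count (L : List (Lit n)) :
    L.length = ∑ i, (L.count (true, i) + L.count (false, i)) := by
  have h := L.sum_map_eq_sum_count fun _ => 1
  rw [List.map_const', List.sum_replicate, smul_eq_mul, mul_one] at h
  simp only [h, smul_eq_mul, mul_one, Fintype.sum_prod_type, Fintype.sum_bool,
    Finset.sum_add_distrib]

theorem majFitness_eq_sum (L : List (Lit n)) :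
    majFitness L = ∑ i, if majRule (L.count (true, i)) (L.count (false, i)) then 1 else 0 :=
  Finset.card_filter _ _

theorem card_majAbsent_eq_sum (L : List (Lit n)) :
    (majAbsent L).card = ∑ i, if L.count (true, i) = 0 ∧ L.count (false, i) = 0 then 1 else 0 := by
  simp only [majAbsent, Finset.card_filter, List.count_eq_zero]

end

/-- **Size and absent-variable bounds for MAJORITY:** `s(L) - v(L) ≤ 4 r(L)` and
`|A(L)| + r(L) ≥ n - v(L)`. -/
theorem majority_size_and_absent_bounds {n : ℕ} (L : List (Lit n)) :
    L.length - majFitness L ≤ 4 * majRedundant L ∧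
    n - majFitness L ≤ (majAbsent L).card + majRedundant L := by
  rw [majFitness_eq_sum, majRedundant_eq_sum_majRedundantCount, card_majAbsent_eq_sum,
    length_eq_sum_count, Nat.sub_le_iff_le_add, Nat.sub_le_iff_le_add]
  constructor
  · rw [Finset.mul_sum, ← Finset.sum_add_distrib]
    exact Finset.sum_le_sum fun _ _ => add_le_four_mul_majRedundantCount_add _ _
  · rw [← Finset.sum_add_distrib, ← Finset.sum_add_distrib]
    calc n = ∑ _i : Fin n, 1 := by simp
      _ ≤ _ := Finset.sum_le_sum fun _ _ => one_le_absent_add_majRedundantCount_add _ _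
end

section
/- Let s > 0 and κ > 0 with κ < s, and let D be a real-valued random variable satisfying |D| ≤ κ almost surely. Then E[s/(s − D)] ≤ (s² + s·E[D])/(s² − κ²). In particular, if additionally s ≥ √2·κ and E[D] ≥ 0, then E[s/(s − D)] ≤ 1 + κ²/(s² − κ²) + 2·E[D]/s. -/
/-!
On `|x| ≤ κ < s` we have `s / (s - x) = s (s + x) / (s² - x²) ≤ (s² + s x) / (s² - κ²)`, an affine
function of `x`, so integrating gives the first bound. The second is the elementary inequality
`s E / (s² - κ²) ≤ 2 E / s` for `E ≥ 0` and `2 κ² ≤ s²`.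
-/

open MeasureTheory

theorem div_sub_le_of_abs_le {s κ x : ℝ} (hκs : κ < s) (hx : |x| ≤ κ) :
    s / (s - x) ≤ (s ^ 2 + s * x) / (s ^ 2 - κ ^ 2) := by
  obtain ⟨hκx, hxκ⟩ := abs_le.mp hx
  have hs : 0 < s := by linarith [abs_nonneg x]
  have hden : 0 < s ^ 2 - κ ^ 2 := by nlinarith
  rw [div_le_div_iff₀ (by linarith) hden]
  nlinarith [sq_le_sq' hκx hxκ]

theorem div_add_le_one_add_div_add_div {s κ E : ℝ} (hs : 0 < s) (hκs : 2 * κ ^ 2 ≤ s ^ 2)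
    (hE : 0 ≤ E) :
    (s ^ 2 + s * E) / (s ^ 2 - κ ^ 2) ≤ 1 + κ ^ 2 / (s ^ 2 - κ ^ 2) + 2 * E / s := by
  have hden : 0 < s ^ 2 - κ ^ 2 := by nlinarith
  have hsplit : (s ^ 2 + s * E) / (s ^ 2 - κ ^ 2)
      = 1 + κ ^ 2 / (s ^ 2 - κ ^ 2) + s * E / (s ^ 2 - κ ^ 2) := by
    field_simp
    ring
  have htail : s * E / (s ^ 2 - κ ^ 2) ≤ 2 * E / s := by
    rw [div_le_div_iff₀ hden hs]
    nlinarith [mul_nonneg hE (sub_nonneg.mpr hκs)]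
  linarith

section

variable {Ω : Type*} {mΩ : MeasurableSpace Ω} {μ : Measure Ω} {s κ : ℝ} {D : Ω → ℝ}

theorem integrable_div_sub_of_abs_le [IsFiniteMeasure μ] (hκs : κ < s)
    (hDm : AEMeasurable D μ) (hD : ∀ᵐ ω ∂μ, |D ω| ≤ κ) :
    Integrable (fun ω => s / (s - D ω)) μ := by
  have hm : AEMeasurable (fun ω => s / (s - D ω)) μ :=
    aemeasurable_const.div (aemeasurable_const.sub hDm)
  refine Integrable.of_bound hm.aestronglyMeasurable (|s| / (s - κ)) ?_
  filter_upwards [hD] with ω hω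
  have hpos : 0 < s - D ω := by linarith [le_abs_self (D ω)]
  rw [norm_div, Real.norm_eq_abs, Real.norm_eq_abs, abs_of_pos hpos]
  exact div_le_div_of_nonneg_left (abs_nonneg s) (by linarith)
    (by linarith [le_abs_self (D ω)])

theorem integral_div_sub_le_of_abs_le [IsProbabilityMeasure μ] (hκs : κ < s)
    (hDint : Integrable D μ) (hD : ∀ᵐ ω ∂μ, |D ω| ≤ κ) :
    ∫ ω, s / (s - D ω) ∂μ ≤ (s ^ 2 + s * ∫ ω, D ω ∂μ) / (s ^ 2 - κ ^ 2) :=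
  calc ∫ ω, s / (s - D ω) ∂μ
      ≤ ∫ ω, (s ^ 2 + s * D ω) / (s ^ 2 - κ ^ 2) ∂μ :=
        integral_mono_ae (integrable_div_sub_of_abs_le hκs hDint.aemeasurable hD)
          (((integrable_const _).add (hDint.const_mul s)).div_const _)
          (hD.mono fun _ hω => div_sub_le_of_abs_le hκs hω)
    _ = (s ^ 2 + s * ∫ ω, D ω ∂μ) / (s ^ 2 - κ ^ 2) := by
        rw [integral_div, integral_add (integrable_const _) (hDint.const_mul s),
          integral_const, integral_const_mul, probReal_univ, one_smul]

end

theorem expectation_ratio_bound_general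
    {Ω : Type*} {mΩ : MeasurableSpace Ω} (μ : Measure Ω) [IsProbabilityMeasure μ]
    (s κ : ℝ) (hκs : κ < s)
    (D : Ω → ℝ) (hDint : Integrable D μ) (hD : ∀ᵐ ω ∂μ, |D ω| ≤ κ) :
    (∫ ω, s / (s - D ω) ∂μ) ≤ (s ^ 2 + s * ∫ ω, D ω ∂μ) / (s ^ 2 - κ ^ 2) ∧
    (Real.sqrt 2 * κ ≤ s → 0 ≤ ∫ ω, D ω ∂μ →
      (∫ ω, s / (s - D ω) ∂μ) ≤ 1 + κ ^ 2 / (s ^ 2 - κ ^ 2) + 2 * (∫ ω, D ω ∂μ) / s) := by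
  obtain ⟨ω, hω⟩ := hD.exists
  have hκ : 0 ≤ κ := (abs_nonneg _).trans hω
  have hmain := integral_div_sub_le_of_abs_le hκs hDint hD
  refine ⟨hmain, fun hsκ hE => hmain.trans (div_add_le_one_add_div_add_div (by linarith) ?_ hE)⟩
  calc 2 * κ ^ 2 = (Real.sqrt 2 * κ) ^ 2 := by rw [mul_pow, Real.sq_sqrt zero_le_two]
    _ ≤ s ^ 2 := pow_le_pow_left₀ (by positivity) hsκ 2

/-- If `|D| ≤ κ < s` almost surely with `s, κ > 0`, then
`E[s/(s - D)] ≤ (s² + s E[D])/(s² - κ²)`; and if moreover `s ≥ √2 κ` and `E[D] ≥ 0`, then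
`E[s/(s - D)] ≤ 1 + κ²/(s² - κ²) + 2 E[D]/s`. -/
theorem expectation_ratio_bound
    {Ω : Type*} {mΩ : MeasurableSpace Ω} (μ : Measure Ω) [IsProbabilityMeasure μ]
    (s κ : ℝ) (hs : 0 < s) (hκ : 0 < κ) (hκs : κ < s)
    (D : Ω → ℝ) (hDint : Integrable D μ) (hD : ∀ᵐ ω ∂μ, |D ω| ≤ κ) :
    (∫ ω, s / (s - D ω) ∂μ) ≤ (s ^ 2 + s * ∫ ω, D ω ∂μ) / (s ^ 2 - κ ^ 2) ∧
    (Real.sqrt 2 * κ ≤ s → 0 ≤ ∫ ω, D ω ∂μ →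
      (∫ ω, s / (s - D ω) ∂μ) ≤ 1 + κ ^ 2 / (s ^ 2 - κ ^ 2) + 2 * (∫ ω, D ω ∂μ) / s) :=
  expectation_ratio_bound_general (mΩ := mΩ) μ s κ hκs D hDint hD
end
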